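/- arXiv:2006.04712 — 3 statements merged into one kernel-verified Lean document; each statement's English description precedes it below -/
import Mathlib

section
/- Let A be a symbolic advice (a predicate on finite paths of a finite MDP M), s₀ a state and H a horizon, and define the nondeterministic strategies σ_A^H(p) = {a | ∃s, ∃p' of length H-|p|-1 from s, p·as·p' ⊨ A} and τ_A^H(p,a) = {s ∈ Supp(P(last(p),a)) | ∃p' of length H-|p|-1 from s, p·as·p' ⊨ A}. Then FPaths^H_M(s₀,A) = FPaths^H_M(s₀,σ_A^H) ∩ FPaths^H_M(s₀,τ_A^H), i.e., the H-length paths from s₀ satisfying A are exactly those compatible with both σ_A^H and τ_A^H. -/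
open Finset MeasureTheory Filter Asymptotics
open scoped BigOperators Classical ENNReal

noncomputable section

namespace PaperMCTS

variable {S A : Type}

/-- A (finite) Markov decision process: transition kernel `P`, reward `R`,
terminal reward `RT`. -/
structure MDP (S A : Type) where
  P : S → A → S → ℝ
  R : S → A → ℝ
  RT : S → ℝ

/-- `P s a` is a probability distribution on states, for every `s, a`. -/
def MDP.IsProper [Fintype S] (M : MDP S A) : Prop :=
  (∀ s a s', 0 ≤ M.P s a s') ∧ ∀ s a, ∑ s', M.P s a s' = 1

/-- A path of length `i`: `i+1` states and `i` actions. -/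
abbrev Path (S A : Type) (i : ℕ) : Type := (Fin (i + 1) → S) × (Fin i → A)

def Path.first {i : ℕ} (p : Path S A i) : S := p.1 0

def Path.lastState {i : ℕ} (p : Path S A i) : S := p.1 (Fin.last i)

/-- The prefix of length `j` of a path of length `i ≥ j`. -/
def Path.take {i : ℕ} (p : Path S A i) (j : ℕ) (h : j ≤ i) : Path S A j :=
  (fun t => p.1 ⟨t, by have := t.isLt; omega⟩,
   fun t => p.2 ⟨t, by have := t.isLt; omega⟩)

/-- Extension of a path by one action and one state: `p · a s`. -/
def Path.snoc {i : ℕ} (p : Path S A i) (a : A) (s : S) : Path S A (i + 1) :=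
  (fun t => if h : (t : ℕ) ≤ i then p.1 ⟨t, by omega⟩ else s,
   fun t => if h : (t : ℕ) < i then p.2 ⟨t, h⟩ else a)

/-- The path of length `0` at state `s`. -/
def constPath (s : S) : Path S A 0 := (fun _ => s, fun t => t.elim0)

/-- A path of the MDP: all stochastic steps have positive probability. -/
def MDP.ValidPath (M : MDP S A) {i : ℕ} (p : Path S A i) : Prop :=
  ∀ t : Fin i, 0 < M.P (p.1 t.castSucc) (p.2 t) (p.1 t.succ)

/-- A (probabilistic) strategy maps every finite path to weights on actions. -/
def Strategy (S A : Type) : Type := ∀ i : ℕ, Path S A i → A → ℝ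

def IsStrategy [Fintype A] (σ : Strategy S A) : Prop :=
  (∀ i p a, 0 ≤ σ i p a) ∧ ∀ i p, ∑ a, σ i p a = 1

/-- A strategy is deterministic if each of its distributions has singleton support. -/
def Deterministic (σ : Strategy S A) : Prop :=
  ∀ (i : ℕ) (p : Path S A i), ∃ a, ∀ b, (0 < σ i p b ↔ b = a)

/-- Probability `Pr^i_{M,σ}(p) = ∏_t σ(p|_t)(a_t) · P(s_t,a_t)(s_{t+1})`. -/
def pathProb (M : MDP S A) (σ : Strategy S A) {i : ℕ} (p : Path S A i) : ℝ :=
  ∏ t : Fin i,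
    σ t (Path.take p t t.isLt.le) (p.2 t) * M.P (p.1 t.castSucc) (p.2 t) (p.1 t.succ)

/-- Compatibility with a probabilistic strategy: all played actions are in the support. -/
def CompatStrat (σ : Strategy S A) {i : ℕ} (p : Path S A i) : Prop :=
  ∀ t : Fin i, 0 < σ t (Path.take p t t.isLt.le) (p.2 t)

/-- Total reward of a path. -/
def pathReward (M : MDP S A) {i : ℕ} (p : Path S A i) : ℝ :=
  (∑ t : Fin i, M.R (p.1 t.castSucc) (p.2 t)) + M.RT (Path.lastState p)

/-- Expected total reward of strategy `σ` with horizon `i` from `s`. -/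
def ValStrat [Fintype S] [Fintype A] (M : MDP S A) (σ : Strategy S A) (i : ℕ) (s : S) : ℝ :=
  ∑ p : Path S A i, if Path.first p = s then pathProb M σ p * pathReward M p else 0

/-- Optimal expected total reward of horizon `i` from `s`. -/
def MDP.Val [Fintype S] [Fintype A] (M : MDP S A) (i : ℕ) (s : S) : ℝ :=
  ⨆ σ : {σ : Strategy S A // IsStrategy σ}, ValStrat M σ.1 i s

/-- Optimal actions: maximizers in the value-iteration recurrence (`opt^{k+1}`). -/
def MDP.optA [Fintype S] [Fintype A] (M : MDP S A) (k : ℕ) (s : S) : Set A :=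
  {a | ∀ b, M.R s b + ∑ s', M.P s b s' * M.Val k s' ≤
        M.R s a + ∑ s', M.P s a s' * M.Val k s'}

/-- States of the depth-`H` tree unfolding: paths of length at most `H`. -/
abbrev UState (S A : Type) (H : ℕ) : Type := Σ i : Fin (H + 1), Path S A (i : ℕ)

def UState.root (H : ℕ) (s₀ : S) : UState S A H := ⟨⟨0, by omega⟩, constPath s₀⟩

/-- Depth-`H` tree unfolding of an MDP (with self loops at the leaves). -/
def MDP.unfold (M : MDP S A) (H : ℕ) : MDP (UState S A H) A where
  P := fun q a q' =>
    if h : (q.1 : ℕ) < H then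
      if q' = ⟨⟨(q.1 : ℕ) + 1, by omega⟩, Path.snoc q.2 a (Path.lastState q'.2)⟩ then
        M.P (Path.lastState q.2) a (Path.lastState q'.2)
      else 0
    else if q' = q then 1 else 0
  R := fun q a => if (q.1 : ℕ) < H then M.R (Path.lastState q.2) a else 0
  RT := fun q => M.RT (Path.lastState q.2)

/-- A symbolic advice: a predicate on finite paths. -/
def Advice (S A : Type) : Type := ∀ i : ℕ, Path S A i → Prop

/-- A nondeterministic strategy. -/
def NStrategy (S A : Type) : Type := ∀ i : ℕ, Path S A i → Set A

/-- The nondeterministic strategy `σ_A^H` induced by an advice. -/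
def advStrat (M : MDP S A) (Adv : Advice S A) (H : ℕ) : NStrategy S A := fun i p =>
  if h : i < H then
    {a | ∃ q : Path S A H, Adv H q ∧ Path.take q i h.le = p ∧ q.2 ⟨i, h⟩ = a ∧
      ∀ t : Fin H, i ≤ (t : ℕ) → 0 < M.P (q.1 t.castSucc) (q.2 t) (q.1 t.succ)}
  else Set.univ

/-- The nondeterministic environment strategy `τ_A^H` induced by an advice. -/
def envStrat (M : MDP S A) (Adv : Advice S A) (H : ℕ) :
    ∀ i : ℕ, Path S A i → A → Set S := fun i p a =>
  if h : i < H then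
    {s | 0 < M.P (Path.lastState p) a s ∧
      ∃ q : Path S A H, Adv H q ∧ Path.take q i h.le = p ∧ q.2 ⟨i, h⟩ = a ∧
        q.1 ⟨i + 1, by omega⟩ = s ∧
        ∀ t : Fin H, i ≤ (t : ℕ) → 0 < M.P (q.1 t.castSucc) (q.2 t) (q.1 t.succ)}
  else {s | 0 < M.P (Path.lastState p) a s}

/-- Compatibility with a nondeterministic strategy. -/
def CompatN (σ : NStrategy S A) {i : ℕ} (p : Path S A i) : Prop :=
  ∀ t : Fin i, p.2 t ∈ σ t (Path.take p t t.isLt.le)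

/-- Compatibility with a nondeterministic environment strategy. -/
def CompatE (τ : ∀ i : ℕ, Path S A i → A → Set S) {i : ℕ} (p : Path S A i) : Prop :=
  ∀ t : Fin i, p.1 t.succ ∈ τ t (Path.take p t t.isLt.le) (p.2 t)

/-- `FPaths^H_M(s₀, A)`: length-`H` paths of `M` from `s₀` satisfying the advice. -/
def FPathsAdv (M : MDP S A) (H : ℕ) (s₀ : S) (Adv : Advice S A) : Set (Path S A H) :=
  {p | M.ValidPath p ∧ Path.first p = s₀ ∧ Adv H p}

/-- `FPaths^H_M(s₀, σ)` for a nondeterministic strategy. -/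
def FPathsN (M : MDP S A) (H : ℕ) (s₀ : S) (σ : NStrategy S A) : Set (Path S A H) :=
  {p | M.ValidPath p ∧ Path.first p = s₀ ∧ CompatN σ p}

/-- `FPaths^H_M(s₀, τ)` for a nondeterministic environment strategy. -/
def FPathsE (M : MDP S A) (H : ℕ) (s₀ : S) (τ : ∀ i : ℕ, Path S A i → A → Set S) :
    Set (Path S A H) :=
  {p | M.ValidPath p ∧ Path.first p = s₀ ∧ CompatE τ p}

/-- `σ` witnesses that `Adv` is strongly enforceable from `s₀` with horizon `H`. -/
def Enforces (M : MDP S A) (Adv : Advice S A) (s₀ : S) (H : ℕ) (σ : NStrategy S A) : Prop :=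
  FPathsN M H s₀ σ = FPathsAdv M H s₀ Adv ∧
  ∀ (i : ℕ) (p : Path S A i), i < H → M.ValidPath p → Path.first p = s₀ →
    CompatN σ p → (σ i p).Nonempty

def StronglyEnforceable (M : MDP S A) (Adv : Advice S A) (s₀ : S) (H : ℕ) : Prop :=
  ∃ σ : NStrategy S A, Enforces M Adv s₀ H σ

/-- The pruned unfolding `T(M, s₀, H, A)`: transitions not compatible with
`σ_A^H` or `τ_A^H` are removed. -/
def prunedUnfold (M : MDP S A) (Adv : Advice S A) (H : ℕ) : MDP (UState S A H) A where
  P := fun q a q' =>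
    if (q.1 : ℕ) < H then
      if a ∈ advStrat M Adv H (q.1 : ℕ) q.2 ∧
          Path.lastState q'.2 ∈ envStrat M Adv H (q.1 : ℕ) q.2 a then
        (M.unfold H).P q a q'
      else 0
    else (M.unfold H).P q a q'
  R := (M.unfold H).R
  RT := (M.unfold H).RT

/-- The optimality assumption: every horizon-`H` optimal deterministic strategy is
contained in `σ_A^H`. -/
def OptAssumption [Fintype S] [Fintype A] (M : MDP S A) (Adv : Advice S A) (H : ℕ) : Prop :=
  ∀ (s : S) (σ : Strategy S A), IsStrategy σ → Deterministic σ →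
    ValStrat M σ H s = M.Val H s →
    ∀ (i : ℕ) (p : Path S A i) (a : A), 0 < σ i p a → a ∈ advStrat M Adv H i p

/-- Actions achievable as the first action of some (deterministic) strategy attaining
the optimal expected total reward of horizon `H` at `s`. -/
def optFirst {T : Type} [Fintype T] [Fintype A] (N : MDP T A) (H : ℕ) (s : T) : Set A :=
  {a | ∃ σ : Strategy T A, IsStrategy σ ∧ Deterministic σ ∧
    ValStrat N σ H s = N.Val H s ∧ 0 < σ 0 (constPath s) a}

/-- All total rewards of paths of length at most `H` lie in `[0,1]`. -/
def BoundedRewards (M : MDP S A) (H : ℕ) : Prop :=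
  ∀ (i : ℕ) (p : Path S A i), i ≤ H → pathReward M p ∈ Set.Icc (0 : ℝ) 1

/-- `WinsAux M T k i h p` says: from the node `p` (of depth `i = H - k`), the
alternation `∃a ∀s ∃a ∀s … ∀s_last` can force reaching a length-`H` path in `T`,
states being quantified over the support of the current transition. -/
def WinsAux (M : MDP S A) {H : ℕ} (T : Path S A H → Prop) :
    (k : ℕ) → (i : ℕ) → i + k = H → Path S A i → Prop
  | 0, i, h, p => T ((show i = H by omega) ▸ p)
  | k + 1, i, h, p =>
      ∃ a : A, ∀ s : S, 0 < M.P (Path.lastState p) a s →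
        WinsAux M T k (i + 1) (by omega) (Path.snoc p a s)

/-- `Adv'` is the strongly enforceable advice extracted from `Adv` (greatest
strongly enforceable advice below `Adv`, from `s₀` with horizon `H`). -/
def ExtractedFrom (M : MDP S A) (Adv Adv' : Advice S A) (s₀ : S) (H : ℕ) : Prop :=
  StronglyEnforceable M Adv' s₀ H ∧
  FPathsAdv M H s₀ Adv' ⊆ FPathsAdv M H s₀ Adv ∧
  ∀ Adv'' : Advice S A, StronglyEnforceable M Adv'' s₀ H →
    FPathsAdv M H s₀ Adv'' ⊆ FPathsAdv M H s₀ Adv →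
    FPathsAdv M H s₀ Adv'' ⊆ FPathsAdv M H s₀ Adv'

/-- Player 1 can enforce, from node `p` of depth `i`, that every continuation
following some deterministic action-selection `f` (against arbitrary stochastic
successors in the support) reaches the target set `T` of leaves. -/
def CanEnforce (M : MDP S A) {H : ℕ} (T : Set (Path S A H)) (i : ℕ) (hi : i ≤ H)
    (p : Path S A i) : Prop :=
  ∃ f : ∀ j : ℕ, Path S A j → A,
    ∀ q : Path S A H, Path.take q i hi = p →
      (∀ t : Fin H, i ≤ (t : ℕ) → q.2 t = f t (Path.take q t t.isLt.le)) →
      (∀ t : Fin H, i ≤ (t : ℕ) → 0 < M.P (q.1 t.castSucc) (q.2 t) (q.1 t.succ)) →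
      q ∈ T

/-- The advice whose satisfied length-`H` paths are exactly the paths to `T`
remaining within winning nodes. -/
def winAdvice (M : MDP S A) {H : ℕ} (T : Set (Path S A H)) : Advice S A :=
  fun j q => ∀ h : j = H, (h ▸ q) ∈ T ∧
    ∀ (t : ℕ) (ht : t ≤ H), CanEnforce M T t ht (Path.take (h ▸ q) t ht)

/-- The uniform strategy. -/
def uniformStrategy (S A : Type) [Fintype A] : Strategy S A :=
  fun _ _ _ => 1 / (Fintype.card A : ℝ)

end PaperMCTS

end
namespace PaperMCTS
/-- `FPaths^H_M(s₀,A) = FPaths^H_M(s₀,σ_A^H) ∩ FPaths^H_M(s₀,τ_A^H)`. -/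
theorem fpaths_advice_decomposition (M : MDP S A) (Adv : Advice S A) (s₀ : S)
    (H : ℕ) (hH : 0 < H) :
    FPathsAdv M H s₀ Adv =
      FPathsN M H s₀ (advStrat M Adv H) ∩ FPathsE M H s₀ (envStrat M Adv H) := by
  ext p
  constructor
  · rintro ⟨hval, hfirst, hadv⟩
    refine ⟨⟨hval, hfirst, ?_⟩, hval, hfirst, ?_⟩
    · intro t
      show p.2 t ∈ advStrat M Adv H (t : ℕ) (Path.take p t t.isLt.le)
      unfold advStrat
      rw [dif_pos t.isLt]
      exact ⟨p, hadv, rfl, rfl, fun t' _ => hval t'⟩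
    · intro t
      show p.1 t.succ ∈ envStrat M Adv H (t : ℕ) (Path.take p t t.isLt.le) (p.2 t)
      unfold envStrat
      rw [dif_pos t.isLt]
      refine ⟨?_, p, hadv, rfl, rfl, ?_, fun t' _ => hval t'⟩
      · exact hval t
      · congr 1
  · rintro ⟨⟨hval, hfirst, _⟩, _, _, hE⟩
    refine ⟨hval, hfirst, ?_⟩
    have ht := hE ⟨H - 1, by omega⟩
    simp only [envStrat] at ht
    rw [dif_pos (show H - 1 < H by omega)] at ht
    obtain ⟨-, q, hq, htake, ha, hs, -⟩ := ht
    have hqp : q = p := by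
      have h1 := congrArg Prod.fst htake
      have h2 := congrArg Prod.snd htake
      refine Prod.ext (funext fun j => ?_) (funext fun j => ?_)
      · rcases lt_or_eq_of_le (Nat.lt_succ_iff.mp j.isLt) with hj | hj
        · have := congrFun h1 ⟨(j : ℕ), by omega⟩
          simpa [Path.take] using this
        · have hje : j = ⟨H, by omega⟩ := Fin.ext hj
          rw [hje]
          have e1 : (⟨H, by omega⟩ : Fin (H + 1)) = (⟨H - 1 + 1, by omega⟩ : Fin (H + 1)) :=
            Fin.ext (by show H = H - 1 + 1; omega)
          have e2 : ((⟨H - 1, by omega⟩ : Fin H)).succ = (⟨H, by omega⟩ : Fin (H + 1)) :=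
            Fin.ext (by show H - 1 + 1 = H; omega)
          rw [e1, hs, e2]
          exact congrArg _ e1
      · rcases Nat.lt_or_ge (j : ℕ) (H - 1) with hj | hj
        · have := congrFun h2 ⟨(j : ℕ), hj⟩
          simpa [Path.take] using this
        · have hje : j = ⟨H - 1, by omega⟩ := Fin.ext (by show (j : ℕ) = H - 1; have := j.isLt; omega)
          rw [hje]
          exact ha
    rwa [hqp] at hq
end PaperMCTS
end

section
/- Let A be a strongly enforceable advice from state s₀ with horizon H in a finite MDP M, i.e., there is a nondeterministic strategy σ with FPaths^H_M(s₀,σ) = FPaths^H_M(s₀,A) and σ(p) ≠ ∅ for all paths p of length ≤ H-1 compatible with σ. Then FPaths^H_M(s₀,σ_A^H) = FPaths^H_M(s₀,A), where σ_A^H(p) = {a | ∃s ∃p', p·as·p' ⊨ A with |p·as·p'| = H}. -/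
open Finset MeasureTheory Filter Asymptotics
open scoped BigOperators Classical ENNReal

namespace PaperMCTS
/-- for a strongly enforceable advice, the canonical strategy `σ_A^H`
generates exactly the paths satisfying the advice. -/
theorem enforceable_canonical_strategy (M : MDP S A) (Adv : Advice S A) (s₀ : S) (H : ℕ)
    (hSE : StronglyEnforceable M Adv s₀ H) :
    FPathsN M H s₀ (advStrat M Adv H) = FPathsAdv M H s₀ Adv := by

  obtain ⟨σ, hEq, -⟩ := hSE
  ext p
  constructor
  · rintro ⟨hval, hfirst, hcomp⟩
    have hcompσ : CompatN σ p := by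
      intro t
      have h := hcomp t
      simp only [advStrat, dif_pos t.isLt, Set.mem_setOf_eq] at h
      obtain ⟨q, hAq, hqtake, hqact, hqvalid⟩ := h
      have hq1 : ∀ m (hm : m ≤ (t : ℕ)), q.1 ⟨m, by omega⟩ = p.1 ⟨m, by omega⟩ := by
        intro m hm
        exact congrFun (congrArg Prod.fst hqtake) ⟨m, by omega⟩
      have hq2 : ∀ m (hm : m < (t : ℕ)), q.2 ⟨m, by omega⟩ = p.2 ⟨m, by omega⟩ := by
        intro m hm
        exact congrFun (congrArg Prod.snd hqtake) ⟨m, hm⟩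
      have hqmem : q ∈ FPathsAdv M H s₀ Adv := by
        refine ⟨?_, ?_, hAq⟩
        · intro t'
          rcases le_or_gt (t : ℕ) (t' : ℕ) with h1 | h1
          · exact hqvalid t' h1
          · have e1 : q.1 t'.castSucc = p.1 t'.castSucc := hq1 t' (by omega)
            have e2 : q.2 t' = p.2 t' := hq2 t' h1
            have e3 : q.1 t'.succ = p.1 t'.succ := hq1 (t' + 1) (by omega)
            rw [e1, e2, e3]
            exact hval t'
        · show q.1 0 = s₀
          rw [← hfirst]
          exact hq1 0 (Nat.zero_le _)
      rw [← hEq] at hqmem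
      obtain ⟨-, -, hc⟩ := hqmem
      have hc' := hc t
      rw [← hqact, ← hqtake]
      exact hc'
    have hp : p ∈ FPathsN M H s₀ σ := ⟨hval, hfirst, hcompσ⟩
    rw [hEq] at hp
    exact hp
  · rintro ⟨hval, hfirst, hAdv⟩
    refine ⟨hval, hfirst, fun t => ?_⟩
    show p.2 t ∈ advStrat M Adv H (t : ℕ) (Path.take p (t : ℕ) t.isLt.le)
    simp only [advStrat, dif_pos t.isLt, Set.mem_setOf_eq]
    exact ⟨p, hAdv, rfl, rfl, fun t' _ => hval t'⟩
end PaperMCTS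
end

section
/- Let A be a strongly enforceable advice from s₀ with horizon H in a finite MDP M. Then for every path p of length ≤ H-1 from s₀ and every action a, the environment strategy τ_A^H satisfies: either τ_A^H(p,a) = Supp(P(last(p),a)) or τ_A^H(p,a) = ∅. (All stochastic successors are allowed by A, or none are.) -/
open Finset MeasureTheory Filter Asymptotics
open scoped BigOperators Classical ENNReal

namespace PaperMCTS

variable {S A : Type}

lemma Path.take_self {i : ℕ} (p : Path S A i) (h : i ≤ i) : Path.take p i h = p := rfl

lemma Path.take_take {i j t : ℕ} (q : Path S A i) (hj : j ≤ i) (ht : t ≤ j) :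
    Path.take (Path.take q j hj) t ht = Path.take q t (ht.trans hj) := rfl

lemma Path.take_snoc {i j : ℕ} (p : Path S A i) (a : A) (s : S) (hj : j ≤ i)
    (hj' : j ≤ i + 1) :
    Path.take (Path.snoc p a s) j hj' = Path.take p j hj := by
  refine Prod.ext ?_ ?_ <;> funext t
  · show (Path.snoc p a s).1 ⟨(t : ℕ), _⟩ = p.1 ⟨(t : ℕ), _⟩
    have ht : (t : ℕ) ≤ i := by have := t.isLt; omega
    simp only [Path.snoc]
    rw [dif_pos ht]
  · show (Path.snoc p a s).2 ⟨(t : ℕ), _⟩ = p.2 ⟨(t : ℕ), _⟩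
    have ht : (t : ℕ) < i := by have := t.isLt; omega
    simp only [Path.snoc]
    rw [dif_pos ht]

lemma Path.first_snoc {i : ℕ} (p : Path S A i) (a : A) (s : S) :
    Path.first (Path.snoc p a s) = Path.first p := by
  show (Path.snoc p a s).1 0 = p.1 0
  have h0 : ((0 : Fin (i + 2)) : ℕ) = 0 := rfl
  simp only [Path.snoc]
  rw [dif_pos (by omega : ((0 : Fin (i + 2)) : ℕ) ≤ i)]
  exact congrArg _ (Fin.ext (by simp))

lemma Path.lastState_snoc {i : ℕ} (p : Path S A i) (a : A) (s : S) :
    Path.lastState (Path.snoc p a s) = s := by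
  show (Path.snoc p a s).1 (Fin.last (i + 1)) = s
  simp only [Path.snoc]
  rw [dif_neg (by simp [Fin.last] : ¬ ((Fin.last (i + 1) : ℕ) ≤ i))]

lemma valid_take {M : MDP S A} {i : ℕ} {q : Path S A i} (h : M.ValidPath q)
    (j : ℕ) (hj : j ≤ i) : M.ValidPath (Path.take q j hj) := by
  intro t
  exact h ⟨(t : ℕ), by have := t.isLt; omega⟩

lemma compat_take {σ : NStrategy S A} {i : ℕ} {q : Path S A i} (h : CompatN σ q)
    (j : ℕ) (hj : j ≤ i) : CompatN σ (Path.take q j hj) := by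
  intro t
  exact h ⟨(t : ℕ), by have := t.isLt; omega⟩

lemma valid_snoc {M : MDP S A} {i : ℕ} {p : Path S A i} {a : A} {s : S}
    (hp : M.ValidPath p) (hs : 0 < M.P (Path.lastState p) a s) :
    M.ValidPath (Path.snoc p a s) := by
  intro t
  by_cases ht : (t : ℕ) < i
  · have h1 : (Path.snoc p a s).1 t.castSucc = p.1 ⟨(t : ℕ), by omega⟩ := by
      simp only [Path.snoc]
      rw [dif_pos (by simp; omega : ((t.castSucc : Fin (i + 2)) : ℕ) ≤ i)]
      exact congrArg _ (Fin.ext (by simp))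
    have h2 : (Path.snoc p a s).2 t = p.2 ⟨(t : ℕ), ht⟩ := by
      simp only [Path.snoc]
      rw [dif_pos ht]
    have h3 : (Path.snoc p a s).1 t.succ = p.1 ⟨(t : ℕ) + 1, by omega⟩ := by
      simp only [Path.snoc]
      rw [dif_pos (by simp; omega : ((t.succ : Fin (i + 2)) : ℕ) ≤ i)]
      exact congrArg _ (Fin.ext (by simp))
    rw [h1, h2, h3]
    exact hp ⟨(t : ℕ), ht⟩
  · have hti : (t : ℕ) = i := by have := t.isLt; omega
    have h1 : (Path.snoc p a s).1 t.castSucc = Path.lastState p := by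
      simp only [Path.snoc]
      rw [dif_pos (by simp; omega : ((t.castSucc : Fin (i + 2)) : ℕ) ≤ i)]
      show p.1 _ = p.1 (Fin.last i)
      exact congrArg p.1 (Fin.ext (by simp only [Fin.coe_castSucc, Fin.val_last]; exact hti))
    have h2 : (Path.snoc p a s).2 t = a := by
      simp only [Path.snoc]
      rw [dif_neg (by omega)]
    have h3 : (Path.snoc p a s).1 t.succ = s := by
      simp only [Path.snoc]
      rw [dif_neg (by simp; omega : ¬ ((t.succ : Fin (i + 2)) : ℕ) ≤ i)]
    rw [h1, h2, h3]
    exact hs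

lemma compat_snoc {σ : NStrategy S A} {i : ℕ} {p : Path S A i} {a : A} {s : S}
    (hp : CompatN σ p) (ha : a ∈ σ i p) : CompatN σ (Path.snoc p a s) := by
  intro t
  by_cases ht : (t : ℕ) < i
  · have h2 : (Path.snoc p a s).2 t = p.2 ⟨(t : ℕ), ht⟩ := by
      simp only [Path.snoc]; rw [dif_pos ht]
    have h1 : Path.take (Path.snoc p a s) (t : ℕ) t.isLt.le
        = Path.take p (t : ℕ) ht.le := Path.take_snoc p a s ht.le _
    rw [h2, h1]
    exact hp ⟨(t : ℕ), ht⟩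
  · have hti : (t : ℕ) = i := by have := t.isLt; omega
    have htl : t = Fin.last i := by
      apply Fin.ext
      simp only [Fin.val_last]
      exact hti
    subst htl
    show (Path.snoc p a s).2 (Fin.last i) ∈ σ i (Path.take (Path.snoc p a s) i (by omega))
    have h2 : (Path.snoc p a s).2 (Fin.last i) = a := by
      simp only [Path.snoc]; rw [dif_neg (by simp)]
    rw [h2, Path.take_snoc p a s le_rfl, Path.take_self]
    exact ha

lemma exists_pos_succ [Fintype S] {M : MDP S A} (hM : M.IsProper) (s : S) (a : A) :
    ∃ s', 0 < M.P s a s' := by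
  by_contra h
  push_neg at h
  have hz : ∑ s', M.P s a s' = 0 :=
    Finset.sum_eq_zero fun s' _ => le_antisymm (h s') (hM.1 s a s')
  rw [hM.2 s a] at hz
  exact one_ne_zero hz

lemma extend_compat [Fintype S] {M : MDP S A} (hM : M.IsProper) {Adv : Advice S A}
    {s₀ : S} {H : ℕ} {σ : NStrategy S A} (hσ : Enforces M Adv s₀ H σ) :
    ∀ (k j : ℕ) (h : j + k = H) (p : Path S A j), M.ValidPath p →
      Path.first p = s₀ → CompatN σ p →
      ∃ q : Path S A H, M.ValidPath q ∧ Path.first q = s₀ ∧ CompatN σ q ∧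
        Path.take q j (by omega) = p := by
  intro k
  induction k with
  | zero =>
    intro j h p hv h0 hc
    subst h
    exact ⟨p, hv, h0, hc, Path.take_self p le_rfl⟩
  | succ k ih =>
    intro j h p hv h0 hc
    obtain ⟨a, ha⟩ := hσ.2 j p (by omega) hv h0 hc
    obtain ⟨s, hs⟩ := exists_pos_succ hM (Path.lastState p) a
    obtain ⟨q, hqv, hq0, hqc, hqt⟩ := ih (j + 1) (by omega) (Path.snoc p a s)
      (valid_snoc hv hs) ((Path.first_snoc p a s).trans h0) (compat_snoc hc ha)
    refine ⟨q, hqv, hq0, hqc, ?_⟩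
    have : Path.take q j (by omega) =
        Path.take (Path.take q (j + 1) (by omega)) j (by omega) :=
      (Path.take_take q (by omega) (by omega)).symm
    rw [this, hqt, Path.take_snoc p a s le_rfl, Path.take_self]

/-- for a strongly enforceable advice, `τ_A^H(p,a)` is either the whole
support of `P(last(p),a)` or empty. -/
theorem enforceable_env_all_or_nothing [Fintype S] (M : MDP S A) (hM : M.IsProper)
    (Adv : Advice S A) (s₀ : S) (H : ℕ) (hSE : StronglyEnforceable M Adv s₀ H)
    (i : ℕ) (hi : i < H) (p : Path S A i) (hp : M.ValidPath p)
    (hp0 : Path.first p = s₀) (a : A) :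
    envStrat M Adv H i p a = {s | 0 < M.P (Path.lastState p) a s} ∨
      envStrat M Adv H i p a = ∅ := by
  rcases Set.eq_empty_or_nonempty (envStrat M Adv H i p a) with he | ⟨s, hs⟩
  · exact Or.inr he
  · left
    obtain ⟨σ, hσ⟩ := hSE
    simp only [envStrat] at hs
    rw [dif_pos hi] at hs
    obtain ⟨hps, q, hqA, hqa, hqi2, hqs, hqpos⟩ := hs
    have hqa' : Path.take q i hi.le = p := hqa
    have hqvalid : M.ValidPath q := by
      intro t
      by_cases ht : (t : ℕ) < i
      · have e1 : q.1 t.castSucc = p.1 ⟨(t : ℕ), by omega⟩ :=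
          congrFun (congrArg Prod.fst hqa') ⟨(t : ℕ), by omega⟩
        have e2 : q.2 t = p.2 ⟨(t : ℕ), ht⟩ :=
          congrFun (congrArg Prod.snd hqa') ⟨(t : ℕ), ht⟩
        have e3 : q.1 t.succ = p.1 ⟨(t : ℕ) + 1, by omega⟩ :=
          congrFun (congrArg Prod.fst hqa') ⟨(t : ℕ) + 1, by omega⟩
        rw [e1, e2, e3]
        exact hp ⟨(t : ℕ), ht⟩
      · exact hqpos t (by omega)
    have hqfirst : Path.first q = s₀ := by
      have e : q.1 ⟨0, by omega⟩ = p.1 (⟨0, by omega⟩ : Fin (i + 1)) :=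
        congrFun (congrArg Prod.fst hqa') ⟨0, by omega⟩
      have e0 : Path.first q = q.1 ⟨0, by omega⟩ :=
        congrArg q.1 (Fin.ext (by simp))
      rw [e0, e, show (⟨0, by omega⟩ : Fin (i + 1)) = 0 from Fin.ext (by simp)]
      exact hp0
    have hqN : q ∈ FPathsN M H s₀ σ := by
      rw [hσ.1]
      exact ⟨hqvalid, hqfirst, hqA⟩
    have hqc : CompatN σ q := hqN.2.2
    have hpc : CompatN σ p := by
      have h2 := compat_take hqc i hi.le
      rwa [hqa'] at h2
    have ha : a ∈ σ i p := by
      have h1 : q.2 ⟨i, hi⟩ ∈ σ i (Path.take q i hi.le) := hqc ⟨i, hi⟩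
      have h3 : q.2 ⟨i, hi⟩ = a := hqi2
      rw [h3, hqa'] at h1
      exact h1
    ext s'
    simp only [envStrat, Set.mem_setOf_eq]
    rw [dif_pos hi]
    constructor
    · intro h
      exact h.1
    · intro hs'
      obtain ⟨q', hq'v, hq'0, hq'c, hq't⟩ := extend_compat hM hσ (H - (i + 1)) (i + 1)
        (by omega) (Path.snoc p a s') (valid_snoc hp hs')
        ((Path.first_snoc p a s').trans hp0) (compat_snoc hpc ha)
      have h1 : i + 1 ≤ H := hi
      have e : Path.take q' (i + 1) h1 = Path.snoc p a s' := hq't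
      have hq'Adv : Adv H q' := by
        have hN : q' ∈ FPathsN M H s₀ σ := ⟨hq'v, hq'0, hq'c⟩
        rw [hσ.1] at hN
        exact hN.2.2
      refine ⟨hs', q', hq'Adv, ?_, ?_, ?_, fun t _ => hq'v t⟩
      · show Path.take q' i (le_of_lt hi) = p
        calc Path.take q' i (le_of_lt hi)
            = Path.take (Path.take q' (i + 1) h1) i (Nat.le_succ i) := rfl
          _ = Path.take (Path.snoc p a s') i (Nat.le_succ i) := by rw [e]
          _ = p := by rw [Path.take_snoc p a s' le_rfl, Path.take_self]
      · show q'.2 ⟨i, hi⟩ = a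
        have e2 : q'.2 ⟨i, hi⟩ = (Path.snoc p a s').2 ⟨i, Nat.lt_succ_self i⟩ :=
          congrFun (congrArg Prod.snd e) ⟨i, Nat.lt_succ_self i⟩
        rw [e2]
        simp only [Path.snoc]
        rw [dif_neg (lt_irrefl i)]
      · show q'.1 ⟨i + 1, by omega⟩ = s'
        have e3 : q'.1 ⟨i + 1, by omega⟩
            = (Path.snoc p a s').1 (⟨i + 1, by omega⟩ : Fin (i + 2)) :=
          congrFun (congrArg Prod.fst e) ⟨i + 1, by omega⟩
        rw [e3]
        simp only [Path.snoc]
        rw [dif_neg (by omega)]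
end PaperMCTS
end
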